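/- Let h : ℝ³ → ℂ be continuous, L > 0, V > 0 and x ∈ ℝ³. Then ‖(h_x)_L − (h_x)_{L,V}‖₂ ≤ ‖h_L − h_{L,V}‖₂ + (√3·π/V)·‖x‖·‖h_{L,V}‖₂, where h_L(k) = h(k)·χ_{I_L}(k) and h_{L,V}(k) = h(q_V(k))·χ_{I_L}(k). -/

import Mathlib

open MeasureTheory
open scoped RealInnerProductSpace

/-- The nearest lattice point `q_V(k)` of the momentum lattice `Γ_V`, defined
componentwise by `q_V(k)_j = (2π/V)·⌊V·k_j/(2π) + 1/2⌋`. -/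
noncomputable def qV (V : ℝ) (k : EuclideanSpace ℝ (Fin 3)) :
    EuclideanSpace ℝ (Fin 3) :=
  WithLp.toLp 2 fun j => (2 * Real.pi / V) * (⌊V * k j / (2 * Real.pi) + 1 / 2⌋ : ℤ)

/-- The cube `I_L = [−L,L]³ ⊂ ℝ³`. -/
def cubeI (L : ℝ) : Set (EuclideanSpace ℝ (Fin 3)) :=
  {k | ∀ j, k j ∈ Set.Icc (-L) L}

/-- The cutoff one-particle function `(h_x)_L(k) = h(k)·e^{i⟨k,x⟩}·χ_{I_L}(k)`. -/
noncomputable def hxL (h : EuclideanSpace ℝ (Fin 3) → ℂ) (L : ℝ)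
    (x : EuclideanSpace ℝ (Fin 3)) : EuclideanSpace ℝ (Fin 3) → ℂ :=
  (cubeI L).indicator fun k => h k * Complex.exp (Complex.I * (⟪k, x⟫ : ℝ))

/-- The lattice approximation
`(h_x)_{L,V}(k) = h(q_V(k))·e^{i⟨q_V(k),x⟩}·χ_{I_L}(k)`. -/
noncomputable def hxLV (h : EuclideanSpace ℝ (Fin 3) → ℂ) (L V : ℝ)
    (x : EuclideanSpace ℝ (Fin 3)) : EuclideanSpace ℝ (Fin 3) → ℂ :=
  (cubeI L).indicator fun k =>
    h (qV V k) * Complex.exp (Complex.I * (⟪qV V k, x⟫ : ℝ))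

/-! The difference splits as `(h(k) − h(q_V k))·e^{i⟨k,x⟩} + h(q_V k)·(e^{i⟨k,x⟩} − e^{i⟨q_V k,x⟩})`
on `I_L`. The first term has the pointwise modulus of `h_L − h_{L,V}`; the second is bounded by
`|h_{L,V}(k)|·‖k − q_V k‖·‖x‖`, and `q_V k` lies within half a lattice spacing `π/V` of `k` in each of
the three coordinates. Minkowski's inequality in `L²` then gives the bound. -/

open Complex in
theorem norm_exp_I_mul_ofReal_sub_le (a b : ℝ) :
    ‖exp (I * a) - exp (I * b)‖ ≤ |a - b| := by
  have hfactor : exp (I * a) - exp (I * b) = exp (I * b) * (exp (I * ↑(a - b)) - 1) := by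
    rw [mul_sub, ← exp_add]; push_cast; ring_nf
  rw [hfactor, norm_mul, norm_exp_I_mul_ofReal, one_mul]
  exact Real.norm_exp_I_mul_ofReal_sub_one_le

theorem norm_exp_I_mul_inner_sub_le {E : Type*} [NormedAddCommGroup E] [InnerProductSpace ℝ E]
    (k k' x : E) :
    ‖Complex.exp (Complex.I * (⟪k, x⟫ : ℝ)) - Complex.exp (Complex.I * (⟪k', x⟫ : ℝ))‖ ≤
      ‖k - k'‖ * ‖x‖ :=
  calc _ ≤ |⟪k, x⟫ - ⟪k', x⟫| := norm_exp_I_mul_ofReal_sub_le _ _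
    _ = |⟪k - k', x⟫| := by rw [inner_sub_left]
    _ ≤ ‖k - k'‖ * ‖x‖ := abs_real_inner_le_norm _ _

theorem abs_sub_mul_round_div_le {a : ℝ} (ha : 0 < a) (y : ℝ) :
    |y - a * round (y / a)| ≤ a / 2 :=
  calc |y - a * round (y / a)| = a * |y / a - round (y / a)| := by
        rw [← abs_of_pos ha, ← abs_mul, abs_of_pos ha, mul_sub, mul_div_cancel₀ _ ha.ne']
    _ ≤ a * (1 / 2) := by gcongr; exact abs_sub_round _
    _ = a / 2 := by ring

theorem EuclideanSpace.norm_le_sqrt_card_mul {ι : Type*} [Fintype ι] {v : EuclideanSpace ℝ ι}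
    {r : ℝ} (hr : 0 ≤ r) (hv : ∀ i, |v i| ≤ r) :
    ‖v‖ ≤ √(Fintype.card ι) * r :=
  calc ‖v‖ = √(∑ i, ‖v i‖ ^ 2) := EuclideanSpace.norm_eq v
    _ ≤ √(∑ _i : ι, r ^ 2) := by gcongr with i; exact hv i
    _ = √(Fintype.card ι) * r := by
        rw [Finset.sum_const, Finset.card_univ, nsmul_eq_mul, Real.sqrt_mul (by positivity),
          Real.sqrt_sq hr]

theorem qV_apply (V : ℝ) (k : EuclideanSpace ℝ (Fin 3)) (j : Fin 3) :
    qV V k j = (2 * Real.pi / V) * round (k j / (2 * Real.pi / V)) := by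
  rw [qV, round_eq, div_div_eq_mul_div, mul_comm (k j)]

theorem norm_sub_qV_le {V : ℝ} (hV : 0 < V) (k : EuclideanSpace ℝ (Fin 3)) :
    ‖k - qV V k‖ ≤ √3 * Real.pi / V := by
  have hcoord (j : Fin 3) : |(k - qV V k) j| ≤ Real.pi / V :=
    calc |(k - qV V k) j| = |k j - (2 * Real.pi / V) * round (k j / (2 * Real.pi / V))| := by
          rw [PiLp.sub_apply, qV_apply]
      _ ≤ (2 * Real.pi / V) / 2 := abs_sub_mul_round_div_le (by positivity) (k j)
      _ = Real.pi / V := by ring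
  calc ‖k - qV V k‖ ≤ √(Fintype.card (Fin 3)) * (Real.pi / V) :=
        EuclideanSpace.norm_le_sqrt_card_mul (by positivity) hcoord
    _ = √3 * Real.pi / V := by rw [Fintype.card_fin, Nat.cast_ofNat, mul_div_assoc]

theorem measurable_qV (V : ℝ) : Measurable (qV V) := by
  unfold qV; fun_prop

theorem measurableSet_cubeI (L : ℝ) : MeasurableSet (cubeI L) := by
  unfold cubeI; measurability

theorem norm_hxL_sub_hxLV_apply_le (h : EuclideanSpace ℝ (Fin 3) → ℂ) (L : ℝ) {V : ℝ}
    (hV : 0 < V) (x k : EuclideanSpace ℝ (Fin 3)) :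
    ‖(hxL h L x - hxLV h L V x) k‖ ≤
      ‖((cubeI L).indicator h - (cubeI L).indicator fun k => h (qV V k)) k‖ +
        √3 * Real.pi / V * ‖x‖ * ‖(cubeI L).indicator (fun k => h (qV V k)) k‖ := by
  by_cases hk : k ∈ cubeI L
  · simp only [hxL, hxLV, Pi.sub_apply, Set.indicator_of_mem hk]
    set e := Complex.exp (Complex.I * (⟪k, x⟫ : ℝ))
    set e' := Complex.exp (Complex.I * (⟪qV V k, x⟫ : ℝ))
    have hphase : ‖e - e'‖ ≤ √3 * Real.pi / V * ‖x‖ :=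
      (norm_exp_I_mul_inner_sub_le k (qV V k) x).trans (by gcongr; exact norm_sub_qV_le hV k)
    calc ‖h k * e - h (qV V k) * e'‖ = ‖(h k - h (qV V k)) * e + h (qV V k) * (e - e')‖ := by
          ring_nf
      _ ≤ ‖h k - h (qV V k)‖ * ‖e‖ + ‖h (qV V k)‖ * ‖e - e'‖ := by
          grw [norm_add_le, norm_mul, norm_mul]
      _ ≤ ‖h k - h (qV V k)‖ + √3 * Real.pi / V * ‖x‖ * ‖h (qV V k)‖ := by
          rw [Complex.norm_exp_I_mul_ofReal, mul_one, mul_comm _ ‖h _‖]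
          gcongr
  · simp [hxL, hxLV, Set.indicator_of_notMem hk]

theorem eLpNorm_le_eLpNorm_add_mul_eLpNorm {α E F G : Type*} [MeasurableSpace α]
    {μ : Measure α} {p : ENNReal} (hp : 1 ≤ p) [NormedAddCommGroup E] [NormedAddCommGroup F]
    [NormedAddCommGroup G] {f : α → E} {g₁ : α → F} {g₂ : α → G}
    (hg₁ : AEStronglyMeasurable g₁ μ) (hg₂ : AEStronglyMeasurable g₂ μ) {c : ℝ} (hc : 0 ≤ c)
    (hfg : ∀ a, ‖f a‖ ≤ ‖g₁ a‖ + c * ‖g₂ a‖) :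
    eLpNorm f p μ ≤ eLpNorm g₁ p μ + ENNReal.ofReal c * eLpNorm g₂ p μ :=
  calc eLpNorm f p μ ≤ eLpNorm ((fun a => ‖g₁ a‖) + c • fun a => ‖g₂ a‖) p μ :=
        eLpNorm_mono_real hfg
    _ ≤ eLpNorm (fun a => ‖g₁ a‖) p μ + eLpNorm (c • fun a => ‖g₂ a‖) p μ :=
        eLpNorm_add_le hg₁.norm (hg₂.norm.const_smul c) hp
    _ = eLpNorm g₁ p μ + ENNReal.ofReal c * eLpNorm g₂ p μ := by
        rw [eLpNorm_const_smul, eLpNorm_norm, eLpNorm_norm, Real.enorm_eq_ofReal hc]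

theorem eLpNorm_hxL_sub_hxLV_le_general (h : EuclideanSpace ℝ (Fin 3) → ℂ)
    (hh : Continuous h) (L V : ℝ) (hV : 0 < V)
    (x : EuclideanSpace ℝ (Fin 3)) :
    eLpNorm (hxL h L x - hxLV h L V x) 2 volume ≤
      eLpNorm ((cubeI L).indicator h - (cubeI L).indicator fun k => h (qV V k)) 2
          volume +
        ENNReal.ofReal (Real.sqrt 3 * Real.pi / V * ‖x‖) *
          eLpNorm ((cubeI L).indicator fun k => h (qV V k)) 2 volume := by
  have hcube := measurableSet_cubeI L
  have hhq : Measurable fun k => h (qV V k) := hh.measurable.comp (measurable_qV V)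
  exact eLpNorm_le_eLpNorm_add_mul_eLpNorm one_le_two
    ((hh.measurable.indicator hcube).sub (hhq.indicator hcube)).aestronglyMeasurable
    (hhq.indicator hcube).aestronglyMeasurable (by positivity)
    (norm_hxL_sub_hxLV_apply_le h L hV x)

/-- For continuous `h`, `L > 0`, `V > 0`, `x ∈ ℝ³`:
`‖(h_x)_L − (h_x)_{L,V}‖₂ ≤ ‖h_L − h_{L,V}‖₂ + (√3·π/V)·‖x‖·‖h_{L,V}‖₂`. -/
theorem eLpNorm_hxL_sub_hxLV_le (h : EuclideanSpace ℝ (Fin 3) → ℂ)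
    (hh : Continuous h) (L V : ℝ) (hL : 0 < L) (hV : 0 < V)
    (x : EuclideanSpace ℝ (Fin 3)) :
    eLpNorm (hxL h L x - hxLV h L V x) 2 volume ≤
      eLpNorm ((cubeI L).indicator h - (cubeI L).indicator fun k => h (qV V k)) 2
          volume +
        ENNReal.ofReal (Real.sqrt 3 * Real.pi / V * ‖x‖) *
          eLpNorm ((cubeI L).indicator fun k => h (qV V k)) 2 volume :=
  eLpNorm_hxL_sub_hxLV_le_general h hh L V hV x
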